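/- arXiv:2003.07407 — 5 statements merged into one kernel-verified Lean document; each statement's English description precedes it below -/
import Mathlib

section
/- For any rotation R in SO(3) obtained from a Rodriguez parameter vector ρ in R^3, ‖vex(P_a(R))‖² = 4(1 − ‖R‖_I)‖R‖_I. -/
open Matrix

noncomputable section

/-- Skew-symmetric matrix of a vector in ℝ³: `skew x ⬝ y = x × y`. -/
def skew (x : Fin 3 → ℝ) : Matrix (Fin 3) (Fin 3) ℝ :=
  !![0, -x 2, x 1; x 2, 0, -x 0; -x 1, x 0, 0]

/-- Inverse of the skew map on skew-symmetric matrices. -/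
def vex (M : Matrix (Fin 3) (Fin 3) ℝ) : Fin 3 → ℝ :=
  ![M 2 1, M 0 2, M 1 0]

/-- Anti-symmetric projection `P_a(M) = (M - Mᵀ)/2`. -/
def Pa (M : Matrix (Fin 3) (Fin 3) ℝ) : Matrix (Fin 3) (Fin 3) ℝ :=
  (1 / 2 : ℝ) • (M - Mᵀ)

/-- Rodriguez-parameter rotation matrix. -/
def Rrho (ρ : Fin 3 → ℝ) : Matrix (Fin 3) (Fin 3) ℝ :=
  (1 / (1 + ρ ⬝ᵥ ρ)) • ((1 - ρ ⬝ᵥ ρ) • (1 : Matrix (Fin 3) (Fin 3) ℝ)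
    + (2 : ℝ) • vecMulVec ρ ρ + (2 : ℝ) • skew ρ)

/-- Normalized Euclidean distance `‖R‖_I = (1/4) Tr(I₃ - R)`. -/
def nI (R : Matrix (Fin 3) (Fin 3) ℝ) : ℝ := (1 / 4) * ((1 : Matrix (Fin 3) (Fin 3) ℝ) - R).trace

/-- `M̄ = Tr(M) I₃ - M`. -/
def Mbar (M : Matrix (Fin 3) (Fin 3) ℝ) : Matrix (Fin 3) (Fin 3) ℝ :=
  M.trace • (1 : Matrix (Fin 3) (Fin 3) ℝ) - M

set_option maxHeartbeats 2000000 in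
theorem norm_sq_vex_Pa (ρ : Fin 3 → ℝ) :
    vex (Pa (Rrho ρ)) ⬝ᵥ vex (Pa (Rrho ρ)) = 4 * (1 - nI (Rrho ρ)) * nI (Rrho ρ) := by
  have h : (0:ℝ) < 1 + ρ ⬝ᵥ ρ := by
    have : (0:ℝ) ≤ ρ ⬝ᵥ ρ := by
      simp [dotProduct, Fin.sum_univ_three]
      nlinarith [sq_nonneg (ρ 0), sq_nonneg (ρ 1), sq_nonneg (ρ 2)]
    linarith
  have hne : (1 + ρ ⬝ᵥ ρ) ≠ 0 := ne_of_gt h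
  simp only [vex, Pa, Rrho, nI, dotProduct, Fin.sum_univ_three, trace_fin_three,
    vecMulVec, skew, Matrix.smul_apply, Matrix.sub_apply, Matrix.add_apply,
    Matrix.transpose_apply, Matrix.one_apply, Matrix.of_apply, cons_val', cons_val_zero,
    cons_val_one, head_cons, head_fin_const, cons_val_fin_one, empty_val',
    cons_val_two, tail_cons, smul_eq_mul]
  simp only [dotProduct, Fin.sum_univ_three] at hne
  simp only [Fin.reduceEq, reduceIte, Matrix.one_apply_eq, Matrix.one_apply_ne, ite_true, ite_false]
  field_simp
  ring
end
end

section
/- Let M be a symmetric positive semidefinite 3×3 matrix with Tr(M) = 3, and let R = I₃ + sin(θ)[u]_× + (1 − cos(θ))[u]_×² for a unit vector u. Then ‖R M‖_I := (1/4)Tr((I₃ − R)M) = (1/2)‖R‖_I · uᵀ M̄ u, where M̄ = Tr(M) I₃ − M and ‖R‖_I = (1/4)Tr(I₃ − R). -/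
open Matrix

noncomputable section

theorem nI_mul_symm_angle_axis (θ : ℝ) (u : Fin 3 → ℝ) (hu : u ⬝ᵥ u = 1)
    (M : Matrix (Fin 3) (Fin 3) ℝ) (hM : M.PosSemidef) (htr : M.trace = 3) :
    (1 / 4 : ℝ) * (((1 : Matrix (Fin 3) (Fin 3) ℝ) -
        (1 + Real.sin θ • skew u + (1 - Real.cos θ) • (skew u * skew u))) * M).trace =
      (1 / 2) * nI (1 + Real.sin θ • skew u + (1 - Real.cos θ) • (skew u * skew u)) *
        (u ⬝ᵥ (Mbar M).mulVec u) := by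
  have h01 : M 1 0 = M 0 1 := by have := hM.1.apply 0 1; simpa using this
  have h02 : M 2 0 = M 0 2 := by have := hM.1.apply 0 2; simpa using this
  have h12 : M 2 1 = M 1 2 := by have := hM.1.apply 1 2; simpa using this
  have hu' : u 0 * u 0 + u 1 * u 1 + u 2 * u 2 = 1 := by
    simpa [dotProduct, Fin.sum_univ_three] using hu
  have htr' : M 0 0 + M 1 1 + M 2 2 = 3 := by
    simpa [Matrix.trace, Fin.sum_univ_three] using htr
  simp only [nI, Mbar, skew, Matrix.trace, Matrix.mul_apply, Matrix.sub_apply, Matrix.add_apply,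
    Matrix.one_apply, Matrix.smul_apply, Matrix.mulVec, dotProduct, Fin.sum_univ_three,
    Matrix.diag_apply, Matrix.cons_val', Matrix.cons_val_zero, Matrix.cons_val_one,
    Matrix.head_cons, Matrix.head_fin_const, Matrix.empty_val', Matrix.cons_val_fin_one,
    smul_eq_mul]
  simp only [Fin.isValue, show ((0:Fin 3) ≠ 1) from by decide, show ((0:Fin 3) ≠ 2) from by decide,
    show ((1:Fin 3) ≠ 0) from by decide, show ((1:Fin 3) ≠ 2) from by decide,
    show ((2:Fin 3) ≠ 0) from by decide, show ((2:Fin 3) ≠ 1) from by decide,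
    if_true, if_neg, ite_false, ite_true, if_pos rfl]
  norm_num [h01, h02, h12, Matrix.cons_val_two, Matrix.vecHead, Matrix.vecTail]
  linear_combination (-(1/4)*(1-Real.cos θ)*((M 0 0 + M 1 1 + M 2 2)*(u 0*u 0 + u 1*u 1 + u 2*u 2) -
    (u 0*u 0*M 0 0 + u 1*u 1*M 1 1 + u 2*u 2*M 2 2 + 2*u 0*u 1*M 0 1 + 2*u 0*u 2*M 0 2 + 2*u 1*u 2*M 1 2))) * hu'
end
end

section
/- Let M be a symmetric 3×3 matrix and ρ a Rodriguez parameter vector with R = R_ρ(ρ). Then ‖R M‖_I := (1/4)Tr((I₃ − R)M) = (1/2) · ρᵀ M̄ ρ / (1 + ‖ρ‖²), where M̄ = Tr(M) I₃ − M. -/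
open Matrix

noncomputable section

theorem nI_Rrho_mul_symm (ρ : Fin 3 → ℝ) (M : Matrix (Fin 3) (Fin 3) ℝ) (hM : Mᵀ = M) :
    (1 / 4 : ℝ) * (((1 : Matrix (Fin 3) (Fin 3) ℝ) - Rrho ρ) * M).trace =
      (1 / 2) * (ρ ⬝ᵥ (Mbar M).mulVec ρ) / (1 + ρ ⬝ᵥ ρ) := by
  have h01 := congrFun (congrFun hM 0) 1
  have h02 := congrFun (congrFun hM 0) 2
  have h12 := congrFun (congrFun hM 1) 2
  simp only [transpose_apply] at h01 h02 h12
  have hd : ρ ⬝ᵥ ρ = ρ 0 ^ 2 + ρ 1 ^ 2 + ρ 2 ^ 2 := by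
    simp [dotProduct, Fin.sum_univ_three]; ring
  have hpos : (0:ℝ) < 1 + ρ ⬝ᵥ ρ := by rw [hd]; positivity
  have hne : (1:ℝ) + ρ ⬝ᵥ ρ ≠ 0 := ne_of_gt hpos
  simp only [Rrho, Mbar, skew, trace, mulVec, dotProduct, vecMulVec, Fin.sum_univ_three,
    Matrix.sub_apply, Matrix.add_apply, Matrix.smul_apply, Matrix.mul_apply, Matrix.one_apply,
    diag, smul_eq_mul, Matrix.of_apply, cons_val', cons_val_zero, cons_val_one, head_cons,
    head_fin_const, empty_val', cons_val_fin_one, cons_val_two, tail_cons]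
  simp only [Fin.reduceEq, if_false, if_true, reduceIte]
  have hne' : (1:ℝ) + (ρ 0 * ρ 0 + ρ 1 * ρ 1 + ρ 2 * ρ 2) ≠ 0 := by nlinarith [mul_self_nonneg (ρ 0), mul_self_nonneg (ρ 1), mul_self_nonneg (ρ 2)]
  field_simp
  rw [h01, h02, h12]
  ring
end
end

section
/- Let M be a symmetric 3×3 matrix and ρ a Rodriguez parameter vector with R = R_ρ(ρ). Then ‖vex(P_a(R M))‖² = ρᵀ M̄² ρ / (1+‖ρ‖²) − (ρᵀ M̄ ρ)² / (1+‖ρ‖²)², where M̄ = Tr(M)I₃ − M. -/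
open Matrix

noncomputable section

set_option maxHeartbeats 8000000 in
theorem norm_sq_vex_Pa_Rrho_mul_symm (ρ : Fin 3 → ℝ) (M : Matrix (Fin 3) (Fin 3) ℝ)
    (hM : Mᵀ = M) :
    vex (Pa (Rrho ρ * M)) ⬝ᵥ vex (Pa (Rrho ρ * M)) =
      (ρ ⬝ᵥ (Mbar M * Mbar M).mulVec ρ) / (1 + ρ ⬝ᵥ ρ)
        - (ρ ⬝ᵥ (Mbar M).mulVec ρ) ^ 2 / (1 + ρ ⬝ᵥ ρ) ^ 2 := by
  have h01 : M 0 1 = M 1 0 := congrFun (congrFun hM _) _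
  have h02 : M 0 2 = M 2 0 := congrFun (congrFun hM _) _
  have h12 : M 1 2 = M 2 1 := congrFun (congrFun hM _) _
  simp only [vex, Pa, Rrho, Mbar, trace, diag, Fin.sum_univ_three, Matrix.mul_apply,
    Matrix.sub_apply, Matrix.smul_apply, Matrix.add_apply, Matrix.transpose_apply,
    dotProduct, mulVec, vecMulVec_apply, smul_eq_mul]
  simp [skew, Matrix.one_fin_three, h01, h02, h12]
  have e : (1 + (ρ 0 * ρ 0 + ρ 1 * ρ 1 + ρ 2 * ρ 2) : ℝ) ≠ 0 := by
    nlinarith [sq_nonneg (ρ 0), sq_nonneg (ρ 1), sq_nonneg (ρ 2)]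
  field_simp
  ring
end
end

section
/- Let M be a symmetric positive-definite 3×3 matrix with Tr(M) = 3 and rank 3, M̄ = Tr(M)I₃ − M with minimum eigenvalue λ̲ > 0, and let R = R_ρ(ρ) for a Rodriguez vector ρ. Then (2/λ̲) · ‖vex(P_a(R M))‖² / (1 + Tr(R M M⁻¹)) ≥ ‖R M‖_I, where ‖R M‖_I = (1/4)Tr((I₃−R)M). -/
open Matrix

noncomputable section

set_option maxHeartbeats 2000000 in
theorem vex_Pa_lower_bound (ρ : Fin 3 → ℝ) (M : Matrix (Fin 3) (Fin 3) ℝ)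
    (hM : M.PosDef) (htr : M.trace = 3) (hrk : M.rank = 3)
    (lam : ℝ) (hlam : 0 < lam)
    (hmin : ∀ v : Fin 3 → ℝ, lam * (v ⬝ᵥ v) ≤ v ⬝ᵥ (Mbar M).mulVec v)
    (heig : ∃ v : Fin 3 → ℝ, v ≠ 0 ∧ (Mbar M).mulVec v = lam • v) :
    (1 / 4 : ℝ) * (((1 : Matrix (Fin 3) (Fin 3) ℝ) - Rrho ρ) * M).trace ≤
      (2 / lam) * (vex (Pa (Rrho ρ * M)) ⬝ᵥ vex (Pa (Rrho ρ * M))) /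
        (1 + (Rrho ρ * M * M⁻¹).trace) := by
  have h1s : (0 : ℝ) < 1 + ρ ⬝ᵥ ρ := by
    simp only [dotProduct, Fin.sum_univ_three]
    nlinarith [sq_nonneg (ρ 0), sq_nonneg (ρ 1), sq_nonneg (ρ 2)]
  -- symmetry of M
  have hsym : ∀ i j, M j i = M i j := by
    intro i j
    have h := hM.isHermitian
    have := congrFun (congrFun h.symm j) i
    simpa [Matrix.conjTranspose_apply] using this
  have h10 : M 1 0 = M 0 1 := hsym 0 1
  have h20 : M 2 0 = M 0 2 := hsym 0 2
  have h21 : M 2 1 = M 1 2 := hsym 1 2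
  -- M * M⁻¹ = 1
  have hMinv : M * M⁻¹ = 1 := Matrix.mul_nonsing_inv M (isUnit_iff_ne_zero.mpr hM.det_pos.ne')
  -- clear the 1/(1+s) scalar from Rrho
  have hN' : (1 + ρ ⬝ᵥ ρ) • Rrho ρ
      = (1 - ρ ⬝ᵥ ρ) • (1 : Matrix (Fin 3) (Fin 3) ℝ)
        + (2 : ℝ) • vecMulVec ρ ρ + (2 : ℝ) • skew ρ := by
    rw [Rrho, smul_smul, mul_one_div, div_self h1s.ne', one_smul]
  have hN : (1 + ρ ⬝ᵥ ρ) • (Rrho ρ * M)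
      = ((1 - ρ ⬝ᵥ ρ) • (1 : Matrix (Fin 3) (Fin 3) ℝ)
        + (2 : ℝ) • vecMulVec ρ ρ + (2 : ℝ) • skew ρ) * M := by
    rw [← Matrix.smul_mul, hN']
  have hNe : ∀ i j, (1 + ρ ⬝ᵥ ρ) * (Rrho ρ * M) i j
      = (((1 - ρ ⬝ᵥ ρ) • (1 : Matrix (Fin 3) (Fin 3) ℝ)
        + (2 : ℝ) • vecMulVec ρ ρ + (2 : ℝ) • skew ρ) * M) i j := by
    intro i j
    have := congrFun (congrFun hN i) j
    simpa using this
  have hN'e : ∀ i j, (1 + ρ ⬝ᵥ ρ) * Rrho ρ i j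
      = ((1 - ρ ⬝ᵥ ρ) • (1 : Matrix (Fin 3) (Fin 3) ℝ)
        + (2 : ℝ) • vecMulVec ρ ρ + (2 : ℝ) • skew ρ) i j := by
    intro i j
    have := congrFun (congrFun hN' i) j
    simpa using this
  set w : Fin 3 → ℝ := (Mbar M).mulVec ρ with hw
  set v : Fin 3 → ℝ := vex (Pa (Rrho ρ * M)) with hv
  -- trace of Rrho
  have htrR' : (1 + ρ ⬝ᵥ ρ) * (Rrho ρ).trace = 3 - ρ ⬝ᵥ ρ := by
    rw [trace_fin_three, show (1 + ρ ⬝ᵥ ρ) * (Rrho ρ 0 0 + Rrho ρ 1 1 + Rrho ρ 2 2)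
      = (1 + ρ ⬝ᵥ ρ) * Rrho ρ 0 0 + (1 + ρ ⬝ᵥ ρ) * Rrho ρ 1 1
        + (1 + ρ ⬝ᵥ ρ) * Rrho ρ 2 2 from by ring, hN'e 0 0, hN'e 1 1, hN'e 2 2]
    simp [skew, vecMulVec_apply, Matrix.one_apply, dotProduct, Fin.sum_univ_three]
    ring
  have hden : 1 + (Rrho ρ * M * M⁻¹).trace = 4 / (1 + ρ ⬝ᵥ ρ) := by
    rw [mul_assoc, hMinv, mul_one, eq_div_iff h1s.ne']
    linear_combination htrR'
  -- the LHS identity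
  have hLHS' : (1 + ρ ⬝ᵥ ρ) * (((1 : Matrix (Fin 3) (Fin 3) ℝ) - Rrho ρ) * M).trace
      = 2 * (ρ ⬝ᵥ w) := by
    rw [Matrix.sub_mul, one_mul, trace_sub, trace_fin_three (Rrho ρ * M),
      show (1 + ρ ⬝ᵥ ρ) * (M.trace - ((Rrho ρ * M) 0 0 + (Rrho ρ * M) 1 1 + (Rrho ρ * M) 2 2))
        = (1 + ρ ⬝ᵥ ρ) * M.trace - ((1 + ρ ⬝ᵥ ρ) * (Rrho ρ * M) 0 0
          + (1 + ρ ⬝ᵥ ρ) * (Rrho ρ * M) 1 1 + (1 + ρ ⬝ᵥ ρ) * (Rrho ρ * M) 2 2) from by ring,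
      hNe 0 0, hNe 1 1, hNe 2 2, hw]
    simp [skew, Mbar, mul_apply, mulVec, dotProduct, Fin.sum_univ_three,
      vecMulVec_apply, Matrix.one_apply, trace_fin_three, h10, h20, h21]
    ring
  -- componentwise identity (1+s) v = w + ρ × w
  have hvv : ∀ i j k l m n : Fin 3,
      vex (Pa (Rrho ρ * M)) = ![Pa (Rrho ρ * M) 2 1, Pa (Rrho ρ * M) 0 2, Pa (Rrho ρ * M) 1 0] :=
    fun _ _ _ _ _ _ => rfl
  have hPa : ∀ i j, (1 + ρ ⬝ᵥ ρ) * Pa (Rrho ρ * M) i j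
      = (1 / 2) * ((1 + ρ ⬝ᵥ ρ) * (Rrho ρ * M) i j - (1 + ρ ⬝ᵥ ρ) * (Rrho ρ * M) j i) := by
    intro i j
    simp only [Pa, Matrix.smul_apply, Matrix.sub_apply, Matrix.transpose_apply, smul_eq_mul]
    ring
  have hv0 : (1 + ρ ⬝ᵥ ρ) * v 0 = w 0 + (ρ 1 * w 2 - ρ 2 * w 1) := by
    have e : v 0 = Pa (Rrho ρ * M) 2 1 := rfl
    rw [e, hPa 2 1, hNe 2 1, hNe 1 2, hw]
    simp [skew, Mbar, mul_apply, mulVec, dotProduct, Fin.sum_univ_three,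
      vecMulVec_apply, Matrix.one_apply, trace_fin_three, h10, h20, h21]
    ring
  have hv1 : (1 + ρ ⬝ᵥ ρ) * v 1 = w 1 + (ρ 2 * w 0 - ρ 0 * w 2) := by
    have e : v 1 = Pa (Rrho ρ * M) 0 2 := rfl
    rw [e, hPa 0 2, hNe 0 2, hNe 2 0, hw]
    simp [skew, Mbar, mul_apply, mulVec, dotProduct, Fin.sum_univ_three,
      vecMulVec_apply, Matrix.one_apply, trace_fin_three, h10, h20, h21]
    ring
  have hv2 : (1 + ρ ⬝ᵥ ρ) * v 2 = w 2 + (ρ 0 * w 1 - ρ 1 * w 0) := by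
    have e : v 2 = Pa (Rrho ρ * M) 1 0 := rfl
    rw [e, hPa 1 0, hNe 1 0, hNe 0 1, hw]
    simp [skew, Mbar, mul_apply, mulVec, dotProduct, Fin.sum_univ_three,
      vecMulVec_apply, Matrix.one_apply, trace_fin_three, h10, h20, h21]
    ring
  -- ‖w‖² ≤ (1+s)² ‖v‖²
  have hWV : w ⬝ᵥ w ≤ (1 + ρ ⬝ᵥ ρ) ^ 2 * (v ⬝ᵥ v) := by
    have e : (1 + ρ ⬝ᵥ ρ) ^ 2 * (v ⬝ᵥ v)
        = ((1 + ρ ⬝ᵥ ρ) * v 0) ^ 2 + ((1 + ρ ⬝ᵥ ρ) * v 1) ^ 2 + ((1 + ρ ⬝ᵥ ρ) * v 2) ^ 2 := by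
      simp only [dotProduct, Fin.sum_univ_three]; ring
    rw [e, hv0, hv1, hv2]
    simp only [dotProduct, Fin.sum_univ_three]
    nlinarith [sq_nonneg (ρ 1 * w 2 - ρ 2 * w 1), sq_nonneg (ρ 2 * w 0 - ρ 0 * w 2),
      sq_nonneg (ρ 0 * w 1 - ρ 1 * w 0)]
  -- lam * ρ·w ≤ ‖w‖²
  have hkey : lam * (ρ ⬝ᵥ w) ≤ w ⬝ᵥ w := by
    have h := hmin ρ
    rw [← hw] at h
    simp only [dotProduct, Fin.sum_univ_three] at h ⊢
    nlinarith [sq_nonneg (w 0 - lam * ρ 0), sq_nonneg (w 1 - lam * ρ 1),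
      sq_nonneg (w 2 - lam * ρ 2), mul_nonneg hlam.le (sub_nonneg.mpr h)]
  -- assemble
  have hLHS : (1 / 4 : ℝ) * (((1 : Matrix (Fin 3) (Fin 3) ℝ) - Rrho ρ) * M).trace
      = (ρ ⬝ᵥ w) / (2 * (1 + ρ ⬝ᵥ ρ)) := by
    rw [eq_div_iff (by positivity : (2 * (1 + ρ ⬝ᵥ ρ) : ℝ) ≠ 0)]
    linear_combination (1 / 2 : ℝ) * hLHS'
  rw [hLHS, hden]
  have hrhs0 : ∀ x A L : ℝ, 0 < x → 0 < L → (2 / L) * A / (4 / x) = x * A / (2 * L) := by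
    intro x A L hx hL
    field_simp
    ring
  have hrhs : (2 / lam) * (v ⬝ᵥ v) / (4 / (1 + ρ ⬝ᵥ ρ))
      = (1 + ρ ⬝ᵥ ρ) * (v ⬝ᵥ v) / (2 * lam) := hrhs0 _ _ _ h1s hlam
  rw [hrhs, div_le_div_iff₀ (by positivity) (by positivity)]
  nlinarith [hWV, hkey, h1s]
end
end
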